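/- arXiv:1412.8344 — 4 statements merged into one kernel-verified Lean document; each statement's English description precedes it below -/
import Mathlib

section
/- Let φ : [0,∞) → [0,∞) be increasing, continuous, bounded with sup φ = φ_∞ and Lipschitz with constant u(0), and let 0 < c·φ_∞ < 1. Let g(x) = x/(1 − c·φ(x)) with inverse g⁻¹. Then for all y ≥ z ≥ 0, g⁻¹(y) − g⁻¹(z) ≤ (y − z)·(1 − c·φ(g⁻¹(y))) ≤ y − z. In particular g⁻¹ is 1-Lipschitz on [0,∞). -/
open Set

/-- Let `φ : [0,∞) → [0,∞)` be increasing, continuous, bounded by `φ∞`, Lipschitz with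
constant `u₀ = u(0)`, and `0 < c·φ∞ < 1`. Let `g(x) = x/(1 − c·φ(x))` with inverse `ginv`
on `[0,∞)`. Then for all `y ≥ z ≥ 0`,
`ginv y − ginv z ≤ (y − z)·(1 − c·φ(ginv y)) ≤ y − z`; in particular `ginv` is 1-Lipschitz
on `[0,∞)`. -/
theorem stmt3 (φ g ginv : ℝ → ℝ) (c φinf u₀ : ℝ)
    (hφinf_pos : 0 < φinf) (hc_pos : 0 < c) (hc : c * φinf < 1)
    (hφ_nonneg : ∀ x, 0 ≤ x → 0 ≤ φ x)
    (hφ_mono : StrictMonoOn φ (Ici 0))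
    (hφ_cont : ContinuousOn φ (Ici 0))
    (hφ_bdd : ∀ x, 0 ≤ x → φ x ≤ φinf)
    (hφ_lip : LipschitzOnWith (Real.toNNReal u₀) φ (Ici 0))
    (hg : ∀ x, 0 ≤ x → g x = x / (1 - c * φ x))
    (hginv_mem : ∀ y ∈ Ici (0:ℝ), ginv y ∈ Ici (0:ℝ))
    (hginv_left : ∀ x ∈ Ici (0:ℝ), ginv (g x) = x)
    (hginv_right : ∀ y ∈ Ici (0:ℝ), g (ginv y) = y) :
    (∀ y z, 0 ≤ z → z ≤ y →
      ginv y - ginv z ≤ (y - z) * (1 - c * φ (ginv y)) ∧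
      (y - z) * (1 - c * φ (ginv y)) ≤ y - z) ∧
    LipschitzOnWith 1 ginv (Ici 0) := by
  have hden : ∀ x, 0 ≤ x → 0 < 1 - c * φ x := by
    intro x hx
    have h1 : c * φ x ≤ c * φinf :=
      mul_le_mul_of_nonneg_left (hφ_bdd x hx) hc_pos.le
    linarith
  have hid : ∀ y, 0 ≤ y → ginv y = y * (1 - c * φ (ginv y)) := by
    intro y hy
    have hm := hginv_mem y hy
    have hr := hginv_right y hy
    rw [hg _ hm] at hr
    have hd := hden _ hm
    field_simp at hr
    linarith [hr]
  have hmono : ∀ z y, 0 ≤ z → z ≤ y → ginv z ≤ ginv y := by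
    intro z y hz hzy
    by_contra h
    push_neg at h
    have hy : (0:ℝ) ≤ y := le_trans hz hzy
    have hay : (0:ℝ) ≤ ginv y := hginv_mem y hy
    have haz : (0:ℝ) ≤ ginv z := hginv_mem z hz
    have hφle : φ (ginv y) ≤ φ (ginv z) := (hφ_mono hay haz h).le
    have h1 := hid y hy
    have h2 := hid z hz
    have hd1 := hden _ hay
    have hd2 := hden _ haz
    nlinarith [mul_le_mul_of_nonneg_right hzy hd2.le,
      mul_le_mul_of_nonneg_left (sub_le_sub_left (mul_le_mul_of_nonneg_left hφle hc_pos.le) 1) hy]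
  have key : ∀ y z, 0 ≤ z → z ≤ y →
      ginv y - ginv z ≤ (y - z) * (1 - c * φ (ginv y)) ∧
      (y - z) * (1 - c * φ (ginv y)) ≤ y - z := by
    intro y z hz hzy
    have hy : (0:ℝ) ≤ y := le_trans hz hzy
    have hay : (0:ℝ) ≤ ginv y := hginv_mem y hy
    have haz : (0:ℝ) ≤ ginv z := hginv_mem z hz
    have h1 := hid y hy
    have h2 := hid z hz
    have hmle := hmono z y hz hzy
    have hφle : φ (ginv z) ≤ φ (ginv y) := by
      rcases eq_or_lt_of_le hmle with he | hlt
      · rw [he]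
      · exact (hφ_mono haz hay hlt).le
    have hφny : 0 ≤ φ (ginv y) := hφ_nonneg _ hay
    constructor
    · nlinarith [mul_nonneg hz (mul_nonneg hc_pos.le (sub_nonneg.mpr hφle))]
    · nlinarith [mul_nonneg (sub_nonneg.mpr hzy) (mul_nonneg hc_pos.le hφny)]
  refine ⟨key, ?_⟩
  rw [lipschitzOnWith_iff_dist_le_mul]
  intro y hy z hz
  simp only [NNReal.coe_one, one_mul, Real.dist_eq]
  rcases le_total z y with hzy | hyz
  · have := (key y z hz hzy).1.trans (key y z hz hzy).2
    have hm := hmono z y hz hzy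
    rw [abs_of_nonneg (by linarith), abs_of_nonneg (by linarith)]
    linarith
  · have := (key z y hy hyz).1.trans (key z y hy hyz).2
    have hm := hmono y z hy hyz
    rw [abs_of_nonpos (by linarith), abs_of_nonpos (by linarith)]
    linarith
end

section
/- Let u, φ, g, ψ be as follows: φ(x) = x·u(x) increasing bounded, g(x) = x/(1 − c·φ(x)) with 0 < c·φ_∞ < 1, v = u ∘ g⁻¹, and ψ(x) = x·v(x). Then ψ(x)/(1 + c·ψ(x)) = φ(g⁻¹(x)) for all x ≥ 0. Consequently, x ↦ ψ(x)/(1 + c·ψ(x)) is Lipschitz with constant u(0) (the Lipschitz constant of φ composed with the 1-Lipschitz map g⁻¹). -/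
open Set

/-- With `φ(x) = x·u(x)` increasing and bounded, `g(x) = x/(1 − c·φ(x))` where
`0 < c·φ∞ < 1`, `v = u ∘ g⁻¹` and `ψ(x) = x·v(x)`, one has
`ψ(x)/(1 + c·ψ(x)) = φ(g⁻¹(x))` for all `x ≥ 0`; consequently
`x ↦ ψ(x)/(1 + c·ψ(x))` is Lipschitz on `[0,∞)` with constant `u(0)`. -/
theorem stmt4 (u φ g ginv v ψ : ℝ → ℝ) (c φinf : ℝ)
    (hφinf_pos : 0 < φinf) (hc_pos : 0 < c) (hc : c * φinf < 1)
    (hu_nonneg : ∀ x, 0 ≤ x → 0 ≤ u x)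
    (hu_antitone : ∀ x y, 0 ≤ x → x ≤ y → u y ≤ u x)
    (hφ : ∀ x, 0 ≤ x → φ x = x * u x)
    (hφ_mono : StrictMonoOn φ (Ici 0))
    (hφ_bdd : ∀ x, 0 ≤ x → φ x ≤ φinf)
    (hφ_lip : LipschitzOnWith (Real.toNNReal (u 0)) φ (Ici 0))
    (hg : ∀ x, 0 ≤ x → g x = x / (1 - c * φ x))
    (hginv_mem : ∀ y ∈ Ici (0:ℝ), ginv y ∈ Ici (0:ℝ))
    (hginv_left : ∀ x ∈ Ici (0:ℝ), ginv (g x) = x)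
    (hginv_right : ∀ y ∈ Ici (0:ℝ), g (ginv y) = y)
    (hginv_lip : LipschitzOnWith 1 ginv (Ici 0))
    (hv : ∀ x, 0 ≤ x → v x = u (ginv x))
    (hψ : ∀ x, 0 ≤ x → ψ x = x * v x) :
    (∀ x, 0 ≤ x → ψ x / (1 + c * ψ x) = φ (ginv x)) ∧
    LipschitzOnWith (Real.toNNReal (u 0)) (fun x => ψ x / (1 + c * ψ x)) (Ici 0) := by
  have key : ∀ x, 0 ≤ x → ψ x / (1 + c * ψ x) = φ (ginv x) := by
    intro x hx
    set t := ginv x with ht_def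
    have ht : 0 ≤ t := hginv_mem x hx
    have hgt : g t = x := hginv_right x hx
    have hφt : φ t = t * u t := hφ t ht
    have hφt_nonneg : 0 ≤ φ t := by
      rw [hφt]; exact mul_nonneg ht (hu_nonneg t ht)
    have h1 : 0 < 1 - c * φ t := by
      have : c * φ t ≤ c * φinf := by
        exact mul_le_mul_of_nonneg_left (hφ_bdd t ht) hc_pos.le
      linarith
    have hxval : x = t / (1 - c * φ t) := by
      rw [← hgt, hg t ht]
    have hψx : ψ x = φ t / (1 - c * φ t) := by
      rw [hψ x hx, hv x hx, ← ht_def, hxval, hφt]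
      ring
    rw [hψx]
    field_simp
    rw [mul_add, mul_one, mul_div_cancel₀ _ (by linarith : (1 - φ t * c) ≠ 0), sub_add_cancel, div_one]
  refine ⟨key, ?_⟩
  have comp : LipschitzOnWith (Real.toNNReal (u 0) * 1) (φ ∘ ginv) (Ici 0) :=
    hφ_lip.comp hginv_lip (fun y hy => hginv_mem y hy)
  rw [mul_one] at comp
  intro x hx y hy
  have := comp hx hy
  simpa [Function.comp, key x hx, key y hy] using this
end

section
/- Let B be an N×N Hermitian positive semidefinite matrix and let ν be a probability measure on [0,∞), f : [0,∞) → [0,∞) measurable with ∫f dν = 1 and f(t) ≤ min(α, β·t) for constants α, β > 0. Define h(x) = ∫ (1/(∫ ((y+t)/(t+x))·f(t) ν(dt))) F^B(dy), where F^B is the empirical spectral distribution of B. If h is increasing and continuous on (0,∞) with lim_{x→0⁺} h(x) < 1 and lim_{x→∞} h(x) = ∞, then the equation h(x) = 1 admits a unique positive solution η; moreover η ≤ (1/N)·tr B. (The upper bound follows from Jensen's inequality applied to the convex map y ↦ 1/∫ ((y+t)/(t+x)) f(t) ν(dt).) -/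
open MeasureTheory Matrix Set Filter ComplexOrder
open scoped ENNReal

private lemma aux_trace_eq {n : Type*} [Fintype n] [DecidableEq n]
    (A : Matrix n n ℂ) (hA : A.IsHermitian) :
    A.trace = ∑ i, (hA.eigenvalues i : ℂ) := by
  conv_lhs => rw [hA.spectral_theorem]
  rw [Unitary.conjStarAlgAut_apply, Matrix.trace_mul_cycle, Unitary.coe_star_mul_self, one_mul, Matrix.trace_diagonal]
  rfl

private lemma aux_convexOn {a b : ℝ} (ha : 0 ≤ a) (hb : 0 < b) :
    ConvexOn ℝ (Ici 0) (fun y : ℝ => (y * a + b)⁻¹) := by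
  have h1 : ConvexOn ℝ (Ioi (0:ℝ)) (fun x : ℝ => x⁻¹) := by
    simpa using convexOn_zpow (𝕜 := ℝ) (-1)
  have h2 := h1.comp_affineMap (AffineMap.lineMap (b : ℝ) (a + b))
  have hsub : Ici (0:ℝ) ⊆ (AffineMap.lineMap (b:ℝ) (a+b)) ⁻¹' (Ioi 0) := by
    intro y hy
    simp only [mem_preimage, AffineMap.lineMap_apply_ring', mem_Ioi]
    have : (0:ℝ) ≤ y := hy
    nlinarith
  have h3 := h2.subset hsub (convex_Ici 0)
  have heq : ((fun x : ℝ => x⁻¹) ∘ (AffineMap.lineMap (b:ℝ) (a+b)))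
      = fun y : ℝ => (y * a + b)⁻¹ := by
    funext y
    simp only [Function.comp_apply, AffineMap.lineMap_apply_ring']
    ring_nf
  rwa [heq] at h3

private lemma aux_nu_key (ν : Measure ℝ) [IsProbabilityMeasure ν]
    (hν_supp : ∀ᵐ t ∂ν, 0 ≤ t)
    (f : ℝ → ℝ) (α β : ℝ) (hα : 0 < α) (hβ : 0 < β)
    (hf_nonneg : ∀ t, 0 ≤ t → 0 ≤ f t)
    (hf_bdd : ∀ t, 0 ≤ t → f t ≤ min α (β * t))
    (hf_meas : Measurable f) (hf_int : ∫ t, f t ∂ν = 1)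
    (x : ℝ) (hx : 0 < x) :
    ∃ a b : ℝ, 0 ≤ a ∧ 0 < b ∧ x * a + b = 1 ∧
      ∀ y : ℝ, ∫ t, ((y + t) / (t + x)) * f t ∂ν = y * a + b := by
  set a := ∫ t, (t + x)⁻¹ * f t ∂ν with ha_def
  set b := ∫ t, (t / (t + x)) * f t ∂ν with hb_def
  have meas1 : Measurable (fun t : ℝ => (t + x)⁻¹ * f t) :=
    ((measurable_id.add_const x).inv.mul hf_meas)
  have meas2 : Measurable (fun t : ℝ => (t / (t + x)) * f t) :=
    ((measurable_id.div (measurable_id.add_const x)).mul hf_meas)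
  have int1 : Integrable (fun t : ℝ => (t + x)⁻¹ * f t) ν := by
    refine Integrable.mono' (integrable_const (x⁻¹ * α)) meas1.aestronglyMeasurable ?_
    filter_upwards [hν_supp] with t ht
    have htx : 0 < t + x := by linarith
    have h2 : 0 ≤ f t := hf_nonneg t ht
    have h3 : f t ≤ α := (hf_bdd t ht).trans (min_le_left _ _)
    have h1 : (t + x)⁻¹ ≤ x⁻¹ := by
      apply inv_anti₀ hx; linarith
    rw [Real.norm_eq_abs, abs_of_nonneg (by positivity)]
    exact mul_le_mul h1 h3 h2 (by positivity)
  have int2 : Integrable (fun t : ℝ => (t / (t + x)) * f t) ν := by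
    refine Integrable.mono' (integrable_const α) meas2.aestronglyMeasurable ?_
    filter_upwards [hν_supp] with t ht
    have htx : 0 < t + x := by linarith
    have h2 : 0 ≤ f t := hf_nonneg t ht
    have h3 : f t ≤ α := (hf_bdd t ht).trans (min_le_left _ _)
    have h1 : t / (t + x) ≤ 1 := (div_le_one htx).2 (by linarith)
    have h0 : 0 ≤ t / (t + x) := by positivity
    rw [Real.norm_eq_abs, abs_of_nonneg (by positivity)]
    calc t / (t + x) * f t ≤ 1 * f t := by
          exact mul_le_mul_of_nonneg_right h1 h2
      _ = f t := one_mul _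
      _ ≤ α := h3
  have int3 : Integrable f ν := by
    refine Integrable.mono' (integrable_const α) hf_meas.aestronglyMeasurable ?_
    filter_upwards [hν_supp] with t ht
    rw [Real.norm_eq_abs, abs_of_nonneg (hf_nonneg t ht)]
    exact (hf_bdd t ht).trans (min_le_left _ _)
  have ha : 0 ≤ a := by
    refine integral_nonneg_of_ae ?_
    filter_upwards [hν_supp] with t ht
    have htx : 0 < t + x := by linarith
    have := hf_nonneg t ht
    positivity
  have hb0ae : 0 ≤ᵐ[ν] fun t : ℝ => (t / (t + x)) * f t := by
    filter_upwards [hν_supp] with t ht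
    have htx : 0 < t + x := by linarith
    have := hf_nonneg t ht
    positivity
  have hbge : 0 ≤ b := integral_nonneg_of_ae hb0ae
  have hb : 0 < b := by
    rcases hbge.lt_or_eq with h | h
    · exact h
    · exfalso
      have hzero : (fun t : ℝ => (t / (t + x)) * f t) =ᵐ[ν] 0 :=
        (integral_eq_zero_iff_of_nonneg_ae hb0ae int2).mp h.symm
      have hf0 : f =ᵐ[ν] 0 := by
        filter_upwards [hν_supp, hzero] with t ht h0
        rcases ht.lt_or_eq with htpos | hteq
        · have htx : 0 < t + x := by linarith
          have hdivpos : 0 < t / (t + x) := by positivity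
          have := mul_eq_zero.mp h0
          rcases this with h' | h'
          · exact absurd h' (ne_of_gt hdivpos)
          · exact h'
        · have h1 : f t ≤ β * t := (hf_bdd t ht).trans (min_le_right _ _)
          have h2 : 0 ≤ f t := hf_nonneg t ht
          have : β * t = 0 := by rw [← hteq]; ring
          simp only [Pi.zero_apply]
          linarith
      have : (∫ t, f t ∂ν) = 0 := by
        rw [integral_congr_ae hf0]; simp
      rw [hf_int] at this; norm_num at this
  refine ⟨a, b, ha, hb, ?_, ?_⟩
  · have heq : ∀ᵐ t ∂ν, x * ((t + x)⁻¹ * f t) + (t / (t + x)) * f t = f t := by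
      filter_upwards [hν_supp] with t ht
      have htx : t + x ≠ 0 := by positivity
      field_simp
      ring
    calc x * a + b
        = ∫ t, (x * ((t + x)⁻¹ * f t) + (t / (t + x)) * f t) ∂ν := by
          rw [integral_add (int1.const_mul x) int2, integral_const_mul]
      _ = ∫ t, f t ∂ν := integral_congr_ae heq
      _ = 1 := hf_int
  · intro y
    have heq : ∀ᵐ t ∂ν, ((y + t) / (t + x)) * f t
        = y * ((t + x)⁻¹ * f t) + (t / (t + x)) * f t := by
      filter_upwards [hν_supp] with t ht
      have htx : t + x ≠ 0 := by positivity
      field_simp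
    calc ∫ t, ((y + t) / (t + x)) * f t ∂ν
        = ∫ t, (y * ((t + x)⁻¹ * f t) + (t / (t + x)) * f t) ∂ν := integral_congr_ae heq
      _ = y * a + b := by
          rw [integral_add (int1.const_mul y) int2, integral_const_mul]

/-- Let `B` be an `N×N` Hermitian PSD matrix with empirical spectral distribution `F^B`,
`ν` a probability measure on `[0,∞)`, and `f ≥ 0` with `∫ f dν = 1`, `f(t) ≤ min(α, β t)`.
Define `h(x) = ∫ (∫ ((y+t)/(t+x))·f(t) ν(dt))⁻¹ F^B(dy)`. If `h` is increasing and
continuous on `(0,∞)` with limit `< 1` at `0⁺` and `h(x) → ∞` as `x → ∞`, then `h(x) = 1`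
has a unique positive solution `η`, and `η ≤ (1/N)·tr B`. -/
theorem stmt10 (N : ℕ) (hN : 0 < N) (B : Matrix (Fin N) (Fin N) ℂ)
    (hB : B.IsHermitian) (hBpsd : B.PosSemidef)
    (ν : Measure ℝ) [IsProbabilityMeasure ν] (hν_supp : ∀ᵐ t ∂ν, 0 ≤ t)
    (f : ℝ → ℝ) (α β : ℝ) (hα : 0 < α) (hβ : 0 < β)
    (hf_nonneg : ∀ t, 0 ≤ t → 0 ≤ f t)
    (hf_bdd : ∀ t, 0 ≤ t → f t ≤ min α (β * t))
    (hf_meas : Measurable f) (hf_int : ∫ t, f t ∂ν = 1)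
    (μB : Measure ℝ)
    (hμB : μB = (N : ℝ≥0∞)⁻¹ • (∑ k : Fin N, Measure.dirac (hB.eigenvalues k)))
    (h : ℝ → ℝ)
    (hh : ∀ x, h x = ∫ y, (∫ t, ((y + t) / (t + x)) * f t ∂ν)⁻¹ ∂μB)
    (hh_mono : StrictMonoOn h (Ioi 0))
    (hh_cont : ContinuousOn h (Ioi 0))
    (hh_zero : ∃ L < (1:ℝ), Tendsto h (nhdsWithin 0 (Ioi 0)) (nhds L))
    (hh_top : Tendsto h atTop atTop) :
    ∃ η : ℝ, 0 < η ∧ h η = 1 ∧ η ≤ B.trace.re / N ∧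
      ∀ η' : ℝ, 0 < η' → h η' = 1 → η' = η := by
  have hlam : ∀ k, 0 ≤ hB.eigenvalues k := fun k => hBpsd.eigenvalues_nonneg k
  have hNpos : (0:ℝ) < N := Nat.cast_pos.mpr hN
  -- trace formula
  have htr : B.trace.re = ∑ k, hB.eigenvalues k := by
    have h1 : B.trace = ((∑ k, hB.eigenvalues k : ℝ) : ℂ) := by
      rw [aux_trace_eq B hB]; push_cast; ring
    rw [h1, Complex.ofReal_re]
  set xb : ℝ := B.trace.re / N with hxb_def
  -- the sum formula for h
  have hsum : ∀ x : ℝ, h x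
      = (N:ℝ)⁻¹ * ∑ k, (∫ t, ((hB.eigenvalues k + t) / (t + x)) * f t ∂ν)⁻¹ := by
    intro x
    set G : ℝ → ℝ := fun y => (∫ t, ((y + t) / (t + x)) * f t ∂ν)⁻¹ with hG_def
    have hint : ∀ k : Fin N, Integrable G (Measure.dirac (hB.eigenvalues k)) := by
      intro k
      refine (integrable_const (G (hB.eigenvalues k))).congr ?_
      rw [ae_dirac_eq]
      exact Filter.eventually_pure.2 rfl
    rw [hh, hμB, integral_smul_measure,
      integral_finset_sum_measure (fun k _ => hint k)]
    simp only [integral_dirac, ENNReal.toReal_inv, ENNReal.toReal_natCast, smul_eq_mul]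
    rfl
  -- key inequality
  have key : ∀ x : ℝ, 0 < x → xb ≤ x → 1 ≤ h x := by
    intro x hx hxx
    obtain ⟨a, b, ha, hb, hab, hlin⟩ :=
      aux_nu_key ν hν_supp f α β hα hβ hf_nonneg hf_bdd hf_meas hf_int x hx
    have hconv := aux_convexOn ha hb
    have hw : ∑ _k : Fin N, (N:ℝ)⁻¹ = 1 := by
      rw [Finset.sum_const, Finset.card_univ, Fintype.card_fin, nsmul_eq_mul]
      field_simp
    have hjen := hconv.map_sum_le (t := Finset.univ) (w := fun _ : Fin N => (N:ℝ)⁻¹)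
      (p := hB.eigenvalues) (fun _ _ => by positivity) hw (fun k _ => hlam k)
    have hmean : ∑ k : Fin N, (N:ℝ)⁻¹ • hB.eigenvalues k = xb := by
      simp only [smul_eq_mul, ← Finset.mul_sum, hxb_def, htr]
      ring
    rw [hmean] at hjen
    have hmem0 : 0 < xb * a + b := by
      have hxbnn : 0 ≤ xb := by
        rw [hxb_def, htr]
        exact div_nonneg (Finset.sum_nonneg fun k _ => hlam k) (le_of_lt hNpos)
      nlinarith
    have hle1 : xb * a + b ≤ 1 := by nlinarith
    have h1 : 1 ≤ (xb * a + b)⁻¹ := (one_le_inv₀ hmem0).mpr hle1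
    calc (1:ℝ) ≤ (xb * a + b)⁻¹ := h1
      _ ≤ ∑ k : Fin N, (N:ℝ)⁻¹ • (hB.eigenvalues k * a + b)⁻¹ := hjen
      _ = h x := by
          rw [hsum x, Finset.mul_sum]
          refine Finset.sum_congr rfl fun k _ => ?_
          rw [smul_eq_mul, hlin (hB.eigenvalues k)]
  -- existence via IVT
  obtain ⟨L, hL, hLt⟩ := hh_zero
  have hev : ∀ᶠ x in nhdsWithin 0 (Ioi 0), h x < 1 := hLt.eventually_lt_const hL
  have hmemev : ∀ᶠ x in nhdsWithin 0 (Ioi 0), x ∈ Ioi (0:ℝ) := eventually_mem_nhdsWithin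
  obtain ⟨a0, ha01, ha0⟩ := (hev.and hmemev).exists
  obtain ⟨b0, hb02, hb0a⟩ :=
    ((hh_top.eventually_ge_atTop 2).and (eventually_ge_atTop (a0 + 1))).exists
  have hab0 : a0 ≤ b0 := by linarith
  have hsubset : Icc a0 b0 ⊆ Ioi 0 := fun z hz => lt_of_lt_of_le ha0 hz.1
  have hIVT := intermediate_value_Icc hab0 (hh_cont.mono hsubset)
  have h1mem : (1:ℝ) ∈ Icc (h a0) (h b0) := ⟨ha01.le, by linarith⟩
  obtain ⟨η, hη_mem, hηeq⟩ := hIVT h1mem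
  have hηpos : 0 < η := lt_of_lt_of_le ha0 hη_mem.1
  refine ⟨η, hηpos, hηeq, ?_, ?_⟩
  · by_contra hcon
    push_neg at hcon
    set x' : ℝ := max xb (η / 2) with hx'_def
    have hx'pos : 0 < x' := lt_of_lt_of_le (half_pos hηpos) (le_max_right _ _)
    have hx'lt : x' < η := max_lt hcon (by linarith)
    have h1 : 1 ≤ h x' := key x' hx'pos (le_max_left _ _)
    have h2 : h x' < h η := hh_mono hx'pos hηpos hx'lt
    rw [hηeq] at h2
    linarith
  · intro η' hη' hη'eq
    exact hh_mono.injOn hη' hηpos (by rw [hη'eq, hηeq])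
end

section
/- Removed-sample quadratic form identity for the robust scatter estimator: suppose Ĉ = (1/n)Σᵢ u(qᵢ)·yᵢyᵢ* with qᵢ = (1/N)yᵢ*Ĉ⁻¹yᵢ, and let Ĉ_{(i)} = Ĉ − (1/n)u(qᵢ)yᵢyᵢ*. If Ĉ and Ĉ_{(i)} are invertible and c = N/n, φ(x) = x·u(x), then (1/N)·yᵢ*Ĉ_{(i)}⁻¹yᵢ = qᵢ/(1 − c·φ(qᵢ)) = g(qᵢ) where g(x) = x/(1 − c·φ(x)). Consequently, if g is invertible, qᵢ = g⁻¹((1/N)yᵢ*Ĉ_{(i)}⁻¹yᵢ), and Ĉ = (1/n)Σⱼ (u∘g⁻¹)((1/N)yⱼ*Ĉ_{(j)}⁻¹yⱼ)·yⱼyⱼ*. -/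
open Matrix Finset

lemma vecMulVec_mulVec' {m n : Type*} [Fintype n] (a : m → ℂ) (b w : n → ℂ) :
    (vecMulVec a b) *ᵥ w = (b ⬝ᵥ w) • a := by
  ext i
  simp only [vecMulVec_apply, mulVec, dotProduct, Pi.smul_apply, smul_eq_mul,
    Finset.sum_mul]
  exact Finset.sum_congr rfl fun x _ => by ring

/-- Removed-sample quadratic form identity for the robust scatter estimator: if
`Ĉ = (1/n)Σᵢ u(qᵢ)yᵢyᵢ*` with `qᵢ = (1/N)yᵢ*Ĉ⁻¹yᵢ`, and
`Ĉ₍ᵢ₎ = Ĉ − (1/n)u(qᵢ)yᵢyᵢ*` is invertible, `c = N/n`, `φ(x) = x·u(x)`,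
`1 − c·φ(qᵢ) > 0` and `g(x) = x/(1 − c·φ(x))` with inverse `g⁻¹` on `[0,∞)`, then
`(1/N)yᵢ*Ĉ₍ᵢ₎⁻¹yᵢ = g(qᵢ)`, hence `qᵢ = g⁻¹((1/N)yᵢ*Ĉ₍ᵢ₎⁻¹yᵢ)` and
`Ĉ = (1/n)Σⱼ (u∘g⁻¹)((1/N)yⱼ*Ĉ₍ⱼ₎⁻¹yⱼ)·yⱼyⱼ*`. -/
theorem stmt15 (N n : ℕ) (hN : 0 < N) (hn : 0 < n)
    (y : Fin n → Fin N → ℂ) (u φ g ginv : ℝ → ℝ) (c : ℝ) (hc : c = (N : ℝ) / n)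
    (hφ : ∀ x, 0 ≤ x → φ x = x * u x)
    (C : Matrix (Fin N) (Fin N) ℂ) (hC_unit : IsUnit C.det)
    (q : Fin n → ℝ) (hq_nonneg : ∀ i, 0 ≤ q i)
    (hq : ∀ i, (q i : ℂ) = (N : ℂ)⁻¹ * (star (y i) ⬝ᵥ (C⁻¹ *ᵥ y i)))
    (hfix : C = (n : ℂ)⁻¹ • ∑ i, (u (q i) : ℂ) • vecMulVec (y i) (star (y i)))
    (Ci : Fin n → Matrix (Fin N) (Fin N) ℂ)
    (hCi : ∀ i, Ci i = C - (n : ℂ)⁻¹ • ((u (q i) : ℂ) • vecMulVec (y i) (star (y i))))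
    (hCi_unit : ∀ i, IsUnit (Ci i).det)
    (hpos : ∀ i, 0 < 1 - c * φ (q i))
    (hg : ∀ x, 0 ≤ x → g x = x / (1 - c * φ x))
    (hginv_left : ∀ x, 0 ≤ x → ginv (g x) = x) :
    (∀ i, (N : ℂ)⁻¹ * (star (y i) ⬝ᵥ ((Ci i)⁻¹ *ᵥ y i)) = (g (q i) : ℂ)) ∧
    (∀ i, q i = ginv (((N : ℂ)⁻¹ * (star (y i) ⬝ᵥ ((Ci i)⁻¹ *ᵥ y i))).re)) ∧
    C = (n : ℂ)⁻¹ • ∑ j,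
      (u (ginv (((N : ℂ)⁻¹ * (star (y j) ⬝ᵥ ((Ci j)⁻¹ *ᵥ y j))).re)) : ℂ) •
        vecMulVec (y j) (star (y j)) := by
  have hNne : (N : ℂ) ≠ 0 := Nat.cast_ne_zero.2 hN.ne'
  have hnne : (n : ℂ) ≠ 0 := Nat.cast_ne_zero.2 hn.ne'
  have h1 : ∀ i, (N : ℂ)⁻¹ * (star (y i) ⬝ᵥ ((Ci i)⁻¹ *ᵥ y i)) = (g (q i) : ℂ) := by
    intro i
    set s : ℂ := star (y i) ⬝ᵥ (C⁻¹ *ᵥ y i) with hs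
    have hsq : s = (N : ℂ) * (q i : ℂ) := by
      rw [hq i, ← mul_assoc, mul_inv_cancel₀ hNne, one_mul]
    clear_value s
    set d : ℂ := 1 - (n : ℂ)⁻¹ * (u (q i) : ℂ) * s with hd_def
    have hdr : d = ((1 - c * φ (q i) : ℝ) : ℂ) := by
      rw [hd_def, hsq, hc, hφ _ (hq_nonneg i)]
      push_cast
      field_simp
    clear_value d
    have hd : d ≠ 0 := by
      rw [hdr]
      exact_mod_cast (hpos i).ne'
    have hdot : star (y i) ⬝ᵥ (d⁻¹ • (C⁻¹ *ᵥ y i)) = d⁻¹ * s := by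
      rw [dotProduct_smul, smul_eq_mul, ← hs]
    have hkey : (Ci i) *ᵥ (d⁻¹ • (C⁻¹ *ᵥ y i)) = y i := by
      rw [hCi i, Matrix.sub_mulVec]
      rw [Matrix.mulVec_smul, Matrix.mulVec_mulVec, Matrix.mul_nonsing_inv _ hC_unit,
        Matrix.one_mulVec]
      rw [Matrix.smul_mulVec, Matrix.smul_mulVec, Matrix.mulVec_smul,
        vecMulVec_mulVec']
      ext j
      simp only [Pi.sub_apply, Pi.smul_apply, smul_eq_mul, ← hs]
      linear_combination (y i j) * (inv_mul_cancel₀ hd) - (d⁻¹ * y i j) * hd_def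
    have hinv : (Ci i)⁻¹ *ᵥ y i = d⁻¹ • (C⁻¹ *ᵥ y i) := by
      calc (Ci i)⁻¹ *ᵥ y i = (Ci i)⁻¹ *ᵥ ((Ci i) *ᵥ (d⁻¹ • (C⁻¹ *ᵥ y i))) := by rw [hkey]
        _ = _ := by
            rw [Matrix.mulVec_mulVec, Matrix.nonsing_inv_mul _ (hCi_unit i), Matrix.one_mulVec]
    have hcne : ((1 - c * φ (q i) : ℝ) : ℂ) ≠ 0 := by exact_mod_cast (hpos i).ne'
    rw [hinv, hdot, hg _ (hq_nonneg i)]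
    calc (N : ℂ)⁻¹ * (d⁻¹ * s) = d⁻¹ * ((N : ℂ)⁻¹ * s) := by ring
      _ = d⁻¹ * (q i : ℂ) := by rw [hsq, inv_mul_cancel_left₀ hNne]
      _ = ((1 - c * φ (q i) : ℝ) : ℂ)⁻¹ * (q i : ℂ) := by rw [hdr]
      _ = ((q i / (1 - c * φ (q i)) : ℝ) : ℂ) := by push_cast; ring
  refine ⟨h1, ?_, ?_⟩
  · intro i
    rw [h1 i]
    simp [hginv_left _ (hq_nonneg i)]
  · have h2 : ∀ j, ginv (((N : ℂ)⁻¹ * (star (y j) ⬝ᵥ ((Ci j)⁻¹ *ᵥ y j))).re) = q j := by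
      intro j
      rw [h1 j]
      simp [hginv_left _ (hq_nonneg j)]
    simp_rw [h2]
    exact hfix
end
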